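/- Let (Σ, L, ξ) be a state property system with Cartan map κ, let Ω be the set of connection components of the closure space (Σ, κ(L)), and suppose that for every ω ∈ Ω there exists s(ω) ∈ L with κ(s(ω)) = ω. Let C = {⋁_i s(ω_i) | (ω_i)_i a family of elements of Ω} ∪ {0}. Then for every a ∈ C: if κ(a) is a connected subset of (Σ, κ(L)), then a = 0 or a = s(ω) for some ω ∈ Ω; in particular the atoms of C are exactly the elements s(ω), and every segment [0, a] of C containing no element of C other than 0 and a that is of the form ⋁_i s(ω_i) over a proper nonempty subfamily equals {0, s(ω)} for some ω ∈ Ω or {0}. -/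

import Mathlib

/-! The Cartan map is an order embedding of `L` into `P(Σ)`, so `s ω ≤ s ω'` forces `ω ⊆ ω'`,
hence `ω = ω'` as connection components are maximal connected sets. Consequently a join of the
`s ω` over a family with two distinct members lies strictly above each of them, and a join
whose Cartan image is connected lies inside one component. -/

/-- A state property system `(Σ, L, ξ)`: a set of states `S`, a complete lattice `L`
(bottom `⊥ = 0`, top `⊤ = I`) and a map `ξ` sending each state to the set of properties
actual in it, such that `0` is never actual, actual properties are closed under arbitrary
infima (of arbitrary families, in particular `⊤ = sInf ∅` is always actual), and
`a ≤ b ↔ ∀ r, a ∈ ξ r → b ∈ ξ r`. -/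
structure SPS (S : Type*) (L : Type*) [CompleteLattice L] where
  ξ : S → Set L
  bot_not_mem : ∀ p, ⊥ ∉ ξ p
  sInf_mem : ∀ p, ∀ A ⊆ ξ p, sInf A ∈ ξ p
  le_iff : ∀ a b : L, a ≤ b ↔ ∀ r, a ∈ ξ r → b ∈ ξ r

/-- The Cartan map `κ : L → P(Σ)`, `κ a = {p | a ∈ ξ p}`. -/
def SPS.cartan {S L : Type*} [CompleteLattice L] (P : SPS S L) (a : L) : Set S :=
  {p | a ∈ P.ξ p}

/-- `a` and `b` are separated by a super selection rule. -/
def SPS.ssr {S L : Type*} [CompleteLattice L] (P : SPS S L) (a b : L) : Prop :=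
  ∀ p, a ⊔ b ∈ P.ξ p → a ∈ P.ξ p ∨ b ∈ P.ξ p

/-- `a` is a classical property: it has a complement `c` with `a ⊔ c = ⊤`, `a ⊓ c = ⊥`
and `a` ssr `c`. -/
def SPS.IsClassical {S L : Type*} [CompleteLattice L] (P : SPS S L) (a : L) : Prop :=
  ∃ c : L, a ⊔ c = ⊤ ∧ a ⊓ c = ⊥ ∧ P.ssr a c

/-- `(X, F)` is a closure space: `∅ ∈ F`, `X ∈ F`, and `F` is closed under arbitrary
nonempty intersections. -/
def IsClosureSpace {X : Type*} (F : Set (Set X)) : Prop :=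
  ∅ ∈ F ∧ Set.univ ∈ F ∧ ∀ G ⊆ F, G.Nonempty → ⋂₀ G ∈ F

/-- In a closure space `(X, F)`, a set is closed iff it is in `F`, open iff its complement
is in `F`, and clopen iff both. -/
def IsClopenIn {X : Type*} (F : Set (Set X)) (A : Set X) : Prop :=
  A ∈ F ∧ Aᶜ ∈ F

/-- A closure space is connected iff its only clopen subsets are `∅` and `X`. -/
def IsConnectedCS {X : Type*} (F : Set (Set X)) : Prop :=
  ∀ A : Set X, IsClopenIn F A → A = ∅ ∨ A = Set.univ

/-- A subset `A` of a closure space `(X, F)` is connected iff the induced subspace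
`(A, {F ∩ A | F ∈ F})` is connected, i.e. the only subsets of `A` that are clopen in the
trace closure space are `∅` and `A`. -/
def IsConnectedSubset {X : Type*} (F : Set (Set X)) (A : Set X) : Prop :=
  ∀ B ⊆ A, (∃ C ∈ F, B = C ∩ A) → (∃ D ∈ F, A \ B = D ∩ A) → B = ∅ ∨ B = A

/-- The connection component of `x`: the union of all connected subsets containing `x`. -/
def component {X : Type*} (F : Set (Set X)) (x : X) : Set X :=
  ⋃₀ {A : Set X | x ∈ A ∧ IsConnectedSubset F A}

/-- The closure operator of a closure space: `cl A` is the intersection of all members of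
`F` containing `A` (the least such member, i.e. the supremum operation of the lattice `F`
applied to unions). -/
def closureOf {X : Type*} (F : Set (Set X)) (A : Set X) : Set X :=
  ⋂₀ {C ∈ F | A ⊆ C}

section Connectedness

variable {X : Type*} {F : Set (Set X)}

lemma IsConnectedSubset.inter_eq_empty_or_eq {A K B : Set X} (hA : IsConnectedSubset F A)
    (hAK : A ⊆ K) (hB : ∃ C ∈ F, B = C ∩ K) (hB' : ∃ D ∈ F, K \ B = D ∩ K) :
    B ∩ A = ∅ ∨ B ∩ A = A := by
  obtain ⟨C, hC, rfl⟩ := hB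
  obtain ⟨D, hD, hKD⟩ := hB'
  refine hA _ Set.inter_subset_right ⟨C, hC, ?_⟩ ⟨D, hD, ?_⟩
  · ext x
    have := @hAK x
    simp only [Set.mem_inter_iff]
    tauto
  · ext x
    have := @hAK x
    have := Set.ext_iff.mp hKD x
    simp only [Set.mem_sdiff, Set.mem_inter_iff] at this ⊢
    tauto

lemma IsConnectedSubset.sUnion_of_forall_mem {𝒜 : Set (Set X)} {p : X}
    (hp : ∀ A ∈ 𝒜, p ∈ A) (h𝒜 : ∀ A ∈ 𝒜, IsConnectedSubset F A) :
    IsConnectedSubset F (⋃₀ 𝒜) := by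
  intro B hBK hB hB'
  have hBA : ∀ A ∈ 𝒜, B ∩ A = ∅ ∨ B ∩ A = A := fun A hA =>
    (h𝒜 A hA).inter_eq_empty_or_eq (Set.subset_sUnion_of_mem hA) hB hB'
  by_cases hpB : p ∈ B
  · refine Or.inr (hBK.antisymm fun x ⟨A, hA, hxA⟩ => ?_)
    rcases hBA A hA with h | h
    · exact (h ▸ ⟨hpB, hp A hA⟩ : p ∈ (∅ : Set X)).elim
    · exact (h.symm ▸ hxA : x ∈ B ∩ A).1
  · refine Or.inl (Set.eq_empty_of_forall_notMem fun x hxB => ?_)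
    obtain ⟨A, hA, hxA⟩ := hBK hxB
    rcases hBA A hA with h | h
    · exact (h ▸ ⟨hxB, hxA⟩ : x ∈ (∅ : Set X))
    · exact hpB (h.symm ▸ hp A hA : p ∈ B ∩ A).1

lemma isConnectedSubset_singleton (x : X) : IsConnectedSubset F {x} :=
  fun _ hB _ _ => Set.subset_singleton_iff_eq.mp hB

lemma mem_component (x : X) : x ∈ component F x :=
  ⟨{x}, ⟨rfl, isConnectedSubset_singleton x⟩, rfl⟩

lemma isConnectedSubset_component (x : X) : IsConnectedSubset F (component F x) :=
  IsConnectedSubset.sUnion_of_forall_mem (fun _ hA => hA.1) (fun _ hA => hA.2)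

lemma IsConnectedSubset.subset_component {A : Set X} {x : X} (hA : IsConnectedSubset F A)
    (hx : x ∈ A) : A ⊆ component F x :=
  Set.subset_sUnion_of_mem ⟨hx, hA⟩

lemma component_subset_of_mem {x y : X} (h : x ∈ component F y) :
    component F x ⊆ component F y := by
  have hunion : IsConnectedSubset F (component F x ∪ component F y) := by
    rw [← Set.sUnion_pair]
    refine IsConnectedSubset.sUnion_of_forall_mem (p := x) ?_ ?_
    · rintro A (rfl | rfl)
      exacts [mem_component x, h]
    · rintro A (rfl | rfl) <;> exact isConnectedSubset_component _
  exact Set.subset_union_left.trans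
    (hunion.subset_component (Set.mem_union_right _ (mem_component y)))

lemma component_eq_of_mem {ω : Set X} (hω : ω ∈ Set.range (component F)) {x : X}
    (hx : x ∈ ω) : component F x = ω := by
  obtain ⟨y, rfl⟩ := hω
  exact (component_subset_of_mem hx).antisymm
    ((isConnectedSubset_component y).subset_component hx)

lemma nonempty_of_mem_range_component {ω : Set X} (hω : ω ∈ Set.range (component F)) :
    ω.Nonempty := by
  obtain ⟨x, rfl⟩ := hω
  exact ⟨x, mem_component x⟩

lemma eq_of_subset_of_mem_range_component {ω ω' : Set X}
    (hω : ω ∈ Set.range (component F)) (hω' : ω' ∈ Set.range (component F)) (h : ω ⊆ ω') :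
    ω = ω' := by
  obtain ⟨x, hx⟩ := nonempty_of_mem_range_component hω
  rw [← component_eq_of_mem hω hx, ← component_eq_of_mem hω' (h hx)]

end Connectedness

lemma sSup_image_eq_bot_or_eq_of_subset_singleton {α β : Type*} [CompleteLattice β]
    (f : α → β) {T : Set α} {x : α} (hT : T ⊆ {x}) :
    sSup (f '' T) = ⊥ ∨ sSup (f '' T) = f x := by
  rcases Set.subset_singleton_iff_eq.mp hT with rfl | rfl <;> simp

namespace SPS

variable {S L : Type*} [CompleteLattice L] (P : SPS S L)

lemma cartan_subset_cartan_iff {a b : L} : P.cartan a ⊆ P.cartan b ↔ a ≤ b :=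
  (P.le_iff a b).symm

lemma cartan_bot : P.cartan ⊥ = ∅ :=
  Set.eq_empty_of_forall_notMem P.bot_not_mem

def components : Set (Set S) :=
  Set.range (component (Set.range P.cartan))

def componentJoins (s : Set S → L) : Set L :=
  {a | ∃ T ⊆ P.components, a = sSup (s '' T)}

variable {P}

lemma bot_mem_componentJoins (s : Set S → L) : ⊥ ∈ P.componentJoins s :=
  ⟨∅, Set.empty_subset _, by simp⟩

lemma mem_componentJoins (s : Set S → L) {ω : Set S} (hω : ω ∈ P.components) :
    s ω ∈ P.componentJoins s :=
  ⟨{ω}, Set.singleton_subset_iff.mpr hω, by simp⟩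

variable {s : Set S → L} (hs : ∀ ω ∈ P.components, P.cartan (s ω) = ω)
include hs

lemma ne_bot_of_mem_components {ω : Set S} (hω : ω ∈ P.components) : s ω ≠ ⊥ := by
  intro h
  have hne := nonempty_of_mem_range_component hω
  rw [← hs ω hω, h, cartan_bot] at hne
  exact Set.not_nonempty_empty hne

lemma eq_of_le_of_mem_components {ω ω' : Set S} (hω : ω ∈ P.components)
    (hω' : ω' ∈ P.components) (h : s ω ≤ s ω') : ω = ω' := by
  rw [← P.cartan_subset_cartan_iff, hs ω hω, hs ω' hω'] at h
  exact eq_of_subset_of_mem_range_component hω hω' h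

lemma sSup_image_eq_bot_or_eq_of_le {T : Set (Set S)} (hT : T ⊆ P.components)
    {ω : Set S} (hω : ω ∈ P.components) (h : sSup (s '' T) ≤ s ω) :
    sSup (s '' T) = ⊥ ∨ sSup (s '' T) = s ω :=
  sSup_image_eq_bot_or_eq_of_subset_singleton s fun _ hω' =>
    eq_of_le_of_mem_components hs (hT hω') hω ((le_sSup (Set.mem_image_of_mem s hω')).trans h)

lemma componentJoins_sep_le_eq_pair (ω : Set S) (hω : ω ∈ P.components) :
    {b ∈ P.componentJoins s | b ≤ s ω} = {⊥, s ω} := by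
  ext b
  simp only [Set.mem_ofPred_eq, Set.mem_insert_iff, Set.mem_singleton_iff]
  constructor
  · rintro ⟨⟨T, hT, rfl⟩, hle⟩
    exact sSup_image_eq_bot_or_eq_of_le hs hT hω hle
  · rintro (rfl | rfl)
    · exact ⟨bot_mem_componentJoins s, bot_le⟩
    · exact ⟨mem_componentJoins s hω, le_rfl⟩

lemma sSup_image_eq_of_isConnectedSubset {T : Set (Set S)} (hT : T ⊆ P.components)
    {ω : Set S} (hωT : ω ∈ T)
    (hconn : IsConnectedSubset (Set.range P.cartan) (P.cartan (sSup (s '' T)))) :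
    sSup (s '' T) = s ω := by
  have hle : s ω ≤ sSup (s '' T) := le_sSup (Set.mem_image_of_mem s hωT)
  obtain ⟨x, hx⟩ := nonempty_of_mem_range_component (hT hωT)
  have hxa : x ∈ P.cartan (sSup (s '' T)) :=
    (P.cartan_subset_cartan_iff.mpr hle) ((hs ω (hT hωT)).symm ▸ hx)
  refine le_antisymm ?_ hle
  rw [← P.cartan_subset_cartan_iff, hs ω (hT hωT), ← component_eq_of_mem (hT hωT) hx]
  exact hconn.subset_component hxa

lemma ne_sSup_image_of_ne {T : Set (Set S)} (hT : T ⊆ P.components) {ω ω' : Set S}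
    (hω : ω ∈ T) (hω' : ω' ∈ T) (hne : ω' ≠ ω) : s ω ≠ sSup (s '' T) := by
  intro h
  refine hne (eq_of_le_of_mem_components hs (hT hω') (hT hω) ?_)
  exact h ▸ le_sSup (Set.mem_image_of_mem s hω')

theorem eq_bot_or_eq_of_isConnectedSubset_cartan {a : L} (ha : a ∈ P.componentJoins s)
    (hconn : IsConnectedSubset (Set.range P.cartan) (P.cartan a)) :
    a = ⊥ ∨ ∃ ω ∈ P.components, a = s ω := by
  obtain ⟨T, hT, rfl⟩ := ha
  rcases T.eq_empty_or_nonempty with rfl | ⟨ω, hω⟩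
  · simp
  · exact Or.inr ⟨ω, hT hω, sSup_image_eq_of_isConnectedSubset hs hT hω hconn⟩

theorem ne_bot_and_forall_lt_eq_bot_iff {a : L} (ha : a ∈ P.componentJoins s) :
    (a ≠ ⊥ ∧ ∀ b ∈ P.componentJoins s, b < a → b = ⊥) ↔ ∃ ω ∈ P.components, a = s ω := by
  constructor
  · rintro ⟨hne, hmin⟩
    obtain ⟨T, hT, rfl⟩ := ha
    obtain ⟨ω, hω⟩ : T.Nonempty := Set.nonempty_iff_ne_empty.mpr fun h => hne (by simp [h])
    have hle : s ω ≤ sSup (s '' T) := le_sSup (Set.mem_image_of_mem s hω)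
    refine ⟨ω, hT hω, (hle.eq_or_lt.resolve_right fun hlt => ?_).symm⟩
    exact ne_bot_of_mem_components hs (hT hω) (hmin _ (mem_componentJoins s (hT hω)) hlt)
  · rintro ⟨ω, hω, rfl⟩
    refine ⟨ne_bot_of_mem_components hs hω, fun b hb hlt => ?_⟩
    have hb' : b ∈ ({⊥, s ω} : Set L) := componentJoins_sep_le_eq_pair hs ω hω ▸ ⟨hb, hlt.le⟩
    exact hb'.resolve_right hlt.ne

theorem componentJoins_sep_le_eq_of_no_proper_subjoin {T : Set (Set S)} (hT : T ⊆ P.components)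
    (h : ¬ ∃ b ∈ P.componentJoins s, b ≤ sSup (s '' T) ∧ b ≠ ⊥ ∧ b ≠ sSup (s '' T) ∧
          ∃ T' ⊆ T, T'.Nonempty ∧ T' ≠ T ∧ b = sSup (s '' T')) :
    (∃ ω ∈ P.components, {b ∈ P.componentJoins s | b ≤ sSup (s '' T)} = {⊥, s ω}) ∨
      {b ∈ P.componentJoins s | b ≤ sSup (s '' T)} = {⊥} := by
  rcases T.eq_empty_or_nonempty with rfl | ⟨ω, hω⟩
  · refine Or.inr (Set.ext fun b => ⟨fun hb => ?_, ?_⟩)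
    · simpa using hb.2
    · rintro rfl
      exact ⟨bot_mem_componentJoins s, bot_le⟩
  · have hTω : T = {ω} := by
      refine Set.eq_singleton_iff_unique_mem.mpr ⟨hω, fun ω' hω' => by_contra fun hne => h ?_⟩
      refine ⟨s ω, mem_componentJoins s (hT hω), le_sSup (Set.mem_image_of_mem s hω),
        ne_bot_of_mem_components hs (hT hω), ne_sSup_image_of_ne hs hT hω hω' hne,
        {ω}, Set.singleton_subset_iff.mpr hω, Set.singleton_nonempty ω, fun hωT => ?_, by simp⟩
      exact hne (hωT ▸ hω' : ω' ∈ ({ω} : Set (Set S)))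
    refine Or.inl ⟨ω, hT hω, ?_⟩
    rw [hTω, Set.image_singleton, sSup_singleton]
    exact componentJoins_sep_le_eq_pair hs ω (hT hω)

end SPS

/-- With `Ω` the set of connection components of `(Σ, κ(L))`, `s ω ∈ L` with
`κ (s ω) = ω`, and `C = {⋁_i s ω_i | (ω_i) a family in Ω} ∪ {0}` (empty family giving `⊥`):
(1) for `a ∈ C`, if `κ a` is a connected subset of `(Σ, κ(L))` then `a = 0` or `a = s ω`
    for some `ω ∈ Ω`;
(2) the atoms of `C` (nonbottom elements of `C` with no nonbottom element of `C` strictly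
    below them) are exactly the elements `s ω`, `ω ∈ Ω`;
(3) every segment `[0, a]` of `C` containing no element of `C` other than `0` and `a` that
    is of the form `⋁ s ω_i` over a proper nonempty subfamily (of a family representing
    `a`) equals `{0, s ω}` for some `ω ∈ Ω`, or `{0}`. -/
theorem stmt_13 {S L : Type*} [CompleteLattice L] (P : SPS S L) (s : Set S → L)
    (Ω : Set (Set S)) (hΩ : Ω = Set.range (component (Set.range P.cartan)))
    (hs : ∀ ω ∈ Ω, P.cartan (s ω) = ω)
    (C : Set L) (hC : C = {a : L | ∃ T ⊆ Ω, a = sSup (s '' T)}) :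
    (∀ a ∈ C, IsConnectedSubset (Set.range P.cartan) (P.cartan a) →
      a = ⊥ ∨ ∃ ω ∈ Ω, a = s ω) ∧
    (∀ a ∈ C, ((a ≠ ⊥ ∧ ∀ b ∈ C, b < a → b = ⊥) ↔ ∃ ω ∈ Ω, a = s ω)) ∧
    (∀ a ∈ C, ∀ T ⊆ Ω, a = sSup (s '' T) →
      (¬ ∃ b ∈ C, b ≤ a ∧ b ≠ ⊥ ∧ b ≠ a ∧
          ∃ T' ⊆ T, T'.Nonempty ∧ T' ≠ T ∧ b = sSup (s '' T')) →
      (∃ ω ∈ Ω, {b ∈ C | b ≤ a} = {⊥, s ω}) ∨ {b ∈ C | b ≤ a} = {⊥}) := by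
  subst hΩ hC
  refine ⟨fun a ha => SPS.eq_bot_or_eq_of_isConnectedSubset_cartan hs ha,
    fun a ha => SPS.ne_bot_and_forall_lt_eq_bot_iff hs ha, ?_⟩
  rintro a - T hT rfl
  exact SPS.componentJoins_sep_le_eq_of_no_proper_subjoin hs hT
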